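/- arXiv:1109.6340 — 2 statements merged into one kernel-verified Lean document; each statement's English description precedes it below -/
import Mathlib

section
/- If agents only implement individually rational deals (deals (A, A') for which a payment function p exists with uᵢ(A') − uᵢ(A) > p(i) for all i, except possibly p(i)=0 when A(i)=A'(i)), then any maximal sequence of such deals is finite and terminates in an allocation with maximal utilitarian social welfare sw_u. -/
/-!
A deal with payments is individually rational exactly when it strictly increases utilitarian
social welfare: the payments sum to zero while every agent gains more than it pays, strictly so
for an agent whose bundle changes; conversely a welfare surplus `d` can be shared out by letting
each agent pay its own gain minus `d / n`. Hence social welfare strictly increases along any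
sequence of rational deals, which the finitely many allocations forbid for infinite sequences,
and an allocation admitting no rational deal cannot be beaten by any other allocation.
-/

variable {Agent Res : Type*} [Fintype Agent] [Fintype Res] [DecidableEq Agent]

def bundle (f : Res → Agent) (i : Agent) : Finset Res :=
  Finset.univ.filter fun r => f r = i

def swu (u : Agent → Finset Res → ℝ) (f : Res → Agent) : ℝ :=
  ∑ i, u i (bundle f i)

/-- A deal is individually rational iff there is a payment function as in the paper. -/
def IndRational (u : Agent → Finset Res → ℝ) (A A' : Res → Agent) : Prop :=
  A ≠ A' ∧ ∃ p : Agent → ℝ, (∑ i, p i) = 0 ∧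
    ∀ i, u i (bundle A' i) - u i (bundle A i) > p i ∨
      (bundle A i = bundle A' i ∧ p i = 0)

theorem Finset.exists_sum_eq_zero_forall_lt {ι : Type*} [Fintype ι] {g : ι → ℝ}
    (hg : 0 < ∑ i, g i) : ∃ p : ι → ℝ, ∑ i, p i = 0 ∧ ∀ i, p i < g i := by
  have hcard : (0 : ℝ) < Fintype.card ι := by
    rcases isEmpty_or_nonempty ι with hι | hι
    · simp at hg
    · exact_mod_cast Fintype.card_pos
  refine ⟨fun i => g i - (∑ j, g j) / Fintype.card ι, ?_, fun i => ?_⟩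
  · rw [Finset.sum_sub_distrib, Finset.sum_const, Finset.card_univ, nsmul_eq_mul,
      mul_div_cancel₀ _ hcard.ne', sub_self]
  · exact sub_lt_self _ (div_pos hg hcard)

theorem swu_sub_swu (u : Agent → Finset Res → ℝ) (A A' : Res → Agent) :
    swu u A' - swu u A = ∑ i, (u i (bundle A' i) - u i (bundle A i)) :=
  (Finset.sum_sub_distrib _ _).symm

theorem IndRational.swu_lt {u : Agent → Finset Res → ℝ} {A A' : Res → Agent}
    (h : IndRational u A A') : swu u A < swu u A' := by
  obtain ⟨hne, p, hp, hgain⟩ := h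
  obtain ⟨r, hr⟩ := Function.ne_iff.mp hne
  have hmoved : bundle A (A r) ≠ bundle A' (A r) := fun hb => hr <| by
    have hr' : r ∈ bundle A' (A r) := hb ▸ by simp [bundle]
    simpa [bundle, eq_comm] using hr'
  have hsum : ∑ i, p i < ∑ i, (u i (bundle A' i) - u i (bundle A i)) := by
    refine Finset.sum_lt_sum (fun i _ => ?_) ⟨A r, Finset.mem_univ _, ?_⟩
    · rcases hgain i with hi | ⟨hb, hpi⟩
      · exact hi.le
      · simp [hb, hpi]
    · exact (hgain (A r)).resolve_right fun hb => hmoved hb.1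
  rw [hp, ← swu_sub_swu] at hsum
  exact sub_pos.mp hsum

theorem indRational_of_swu_lt {u : Agent → Finset Res → ℝ} {A A' : Res → Agent}
    (h : swu u A < swu u A') : IndRational u A A' := by
  rw [← sub_pos, swu_sub_swu] at h
  obtain ⟨p, hp, hlt⟩ := Finset.exists_sum_eq_zero_forall_lt h
  refine ⟨fun hA => ?_, p, hp, fun i => Or.inl (hlt i)⟩
  simp [hA] at h

theorem indRational_iff_swu_lt {u : Agent → Finset Res → ℝ} {A A' : Res → Agent} :
    IndRational u A A' ↔ swu u A < swu u A' :=
  ⟨IndRational.swu_lt, indRational_of_swu_lt⟩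

/-- Any maximal sequence of individually rational deals is finite (there is no infinite
sequence of such deals) and any terminal allocation has maximal utilitarian social welfare. -/
theorem stmt1 (u : Agent → Finset Res → ℝ) :
    (¬ ∃ seq : ℕ → (Res → Agent), ∀ n, IndRational u (seq n) (seq (n + 1))) ∧
    (∀ A : Res → Agent, (¬ ∃ A', IndRational u A A') →
      ∀ B : Res → Agent, swu u B ≤ swu u A) := by
  refine ⟨fun ⟨seq, hseq⟩ => ?_, fun A hA B => ?_⟩
  · have hmono : StrictMono (swu u ∘ seq) :=
      strictMono_nat_of_lt_succ fun n => (hseq n).swu_lt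
    exact not_injective_infinite_finite seq hmono.injective.of_comp
  · exact not_lt.mp fun hlt => hA ⟨B, indRational_iff_swu_lt.mpr hlt⟩
end

section
/- Fix finite sets of agents 𝒜 and resources ℛ, and let δ = (A, A') be any deal that is not independently decomposable. Then there exist monotonic utility functions (uᵢ)_{i∈𝒜} such that sw_u(A') > sw_u(A) and sw_u(B) ≤ sw_u(A) for every allocation B ∉ {A, A'}; consequently, starting from initial allocation A, the deal δ is the unique individually rational deal, and hence any sequence of individually rational deals reaching an allocation of maximal utilitarian social welfare must include δ. -/
/-! Give every agent a utility of the form `3 |R| + b i R` with `0 ≤ b ≤ 3`. The cardinality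
part makes it monotonic but contributes the same amount `3 |ℛ|` to the welfare of every
allocation, so only the bonus `b` matters. Agent `i` gets `2` for holding `A i` or `A' i`, and one
fixed agent `j` whose bundle changes gets `1` more for holding `A' j`. Then `A` scores `2n`, `A'`
scores `2n + 1`, and any other `B` scores at most `2(n - 1) + 1`: since the deal is not
independently decomposable, some agent holds in `B` neither its bundle in `A` nor in `A'`. -/

variable {Agent Res : Type*} [Fintype Agent] [Fintype Res] [DecidableEq Agent] [DecidableEq Res]

/-- The set of agents involved in the deal (f, g): those whose bundle changes. -/
def involved (f g : Res → Agent) : Finset Agent :=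
  Finset.univ.filter fun i => bundle f i ≠ bundle g i

/-- A deal (f, g) is independently decomposable iff it is the composition of two deals
involving disjoint sets of agents. -/
def IndDecomp (f g : Res → Agent) : Prop :=
  ∃ B : Res → Agent, B ≠ f ∧ B ≠ g ∧ Disjoint (involved f B) (involved B g)

open Finset

section

omit [DecidableEq Res]

omit [Fintype Agent] in
theorem bundle_injective : Function.Injective (bundle : (Res → Agent) → Agent → Finset Res) := by
  intro f g h
  funext r
  have hr : r ∈ bundle f (f r) := by simp [bundle]
  rw [h] at hr
  exact ((mem_filter.mp hr).2).symm

omit [Fintype Agent] in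
theorem exists_bundle_ne_of_ne {f g : Res → Agent} (h : f ≠ g) : ∃ i, bundle f i ≠ bundle g i :=
  Function.ne_iff.mp (bundle_injective.ne h)

theorem sum_card_bundle (f : Res → Agent) : ∑ i, #(bundle f i) = Fintype.card Res :=
  (card_eq_sum_card_fiberwise fun r _ => mem_univ (f r)).symm

theorem swu_card_mul_add (k : ℝ) (b : Agent → Finset Res → ℝ) (f : Res → Agent) :
    swu (fun i R => k * #R + b i R) f = k * Fintype.card Res + ∑ i, b i (bundle f i) := by
  rw [swu, sum_add_distrib, ← mul_sum, ← Nat.cast_sum, sum_card_bundle]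

end

theorem monotone_card_mul_add {α : Type*} {k : ℝ} {b : Finset α → ℝ} (hb₀ : ∀ R, 0 ≤ b R)
    (hbk : ∀ R, b R ≤ k) : Monotone fun R => k * #R + b R := by
  intro R₁ R₂ hR
  rcases eq_or_ne R₁ R₂ with rfl | hne
  · rfl
  have hcard : (#R₁ : ℝ) + 1 ≤ #R₂ := by
    exact_mod_cast card_lt_card (hR.ssubset_of_ne hne)
  have hk : 0 ≤ k := (hb₀ ∅).trans (hbk ∅)
  nlinarith [hb₀ R₂, hbk R₁]

theorem exists_bundle_ne_ne_of_not_indDecomp {A A' B : Res → Agent} (hnd : ¬ IndDecomp A A')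
    (hBA : B ≠ A) (hBA' : B ≠ A') :
    ∃ i, bundle B i ≠ bundle A i ∧ bundle B i ≠ bundle A' i := by
  by_contra! h
  refine hnd ⟨B, hBA, hBA', disjoint_left.mpr fun i hAB hBA' => ?_⟩
  simp only [involved, mem_filter, mem_univ, true_and] at hAB hBA'
  exact hBA' (h i (Ne.symm hAB))

section DealUtility

variable (A A' : Res → Agent) (j : Agent)

def dealBonus (i : Agent) (R : Finset Res) : ℝ :=
  2 * (if R = bundle A i ∨ R = bundle A' i then 1 else 0) + if i = j ∧ R = bundle A' i then 1 else 0

def dealUtility (i : Agent) (R : Finset Res) : ℝ :=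
  3 * #R + dealBonus A A' j i R

omit [Fintype Agent] in
theorem dealBonus_nonneg (i : Agent) (R : Finset Res) : 0 ≤ dealBonus A A' j i R := by
  unfold dealBonus; split_ifs <;> norm_num

omit [Fintype Agent] in
theorem dealBonus_le_three (i : Agent) (R : Finset Res) : dealBonus A A' j i R ≤ 3 := by
  unfold dealBonus; split_ifs <;> norm_num

omit [Fintype Agent] in
theorem dealUtility_monotone (i : Agent) : Monotone (dealUtility A A' j i) :=
  monotone_card_mul_add (dealBonus_nonneg A A' j i) (dealBonus_le_three A A' j i)

theorem swu_dealUtility (f : Res → Agent) :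
    swu (dealUtility A A' j) f = 3 * Fintype.card Res
      + (2 * #{i | bundle f i = bundle A i ∨ bundle f i = bundle A' i}
        + if bundle f j = bundle A' j then 1 else 0) := by
  unfold dealUtility
  rw [swu_card_mul_add]
  simp only [dealBonus, sum_add_distrib, ← mul_sum, sum_boole, ite_and, sum_ite_eq']
  simp

theorem swu_dealUtility_left (hj : bundle A j ≠ bundle A' j) :
    swu (dealUtility A A' j) A = 3 * Fintype.card Res + 2 * Fintype.card Agent := by
  simp [swu_dealUtility, hj]

theorem swu_dealUtility_right :
    swu (dealUtility A A' j) A' = 3 * Fintype.card Res + 2 * Fintype.card Agent + 1 := by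
  simp [swu_dealUtility, add_assoc]

theorem swu_dealUtility_le {B : Res → Agent} {i₀ : Agent} (hA : bundle B i₀ ≠ bundle A i₀)
    (hA' : bundle B i₀ ≠ bundle A' i₀) :
    swu (dealUtility A A' j) B ≤ 3 * Fintype.card Res + 2 * Fintype.card Agent - 1 := by
  have hcard : #{i | bundle B i = bundle A i ∨ bundle B i = bundle A' i} + 1
      ≤ Fintype.card Agent :=
    card_lt_univ_of_notMem (x := i₀) (by simp [hA, hA'])
  have hcard' : (#{i | bundle B i = bundle A i ∨ bundle B i = bundle A' i} : ℝ) + 1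
      ≤ Fintype.card Agent := by exact_mod_cast hcard
  rw [swu_dealUtility]
  split_ifs <;> linarith

end DealUtility

/-- Necessary deals with side payments (monotonic case): for every deal that is not
independently decomposable there are monotonic utility functions making that deal the
unique individually rational deal from the initial allocation, hence necessary for
reaching maximal utilitarian social welfare. -/
theorem stmt2 (A A' : Res → Agent) (hne : A ≠ A') (hnd : ¬ IndDecomp A A') :
    ∃ u : Agent → Finset Res → ℝ,
      (∀ i, ∀ R₁ R₂ : Finset Res, R₁ ⊆ R₂ → u i R₁ ≤ u i R₂) ∧
      swu u A < swu u A' ∧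
      (∀ B : Res → Agent, B ≠ A → B ≠ A' → swu u B ≤ swu u A) ∧
      (∀ B : Res → Agent, swu u A < swu u B → B = A') := by
  obtain ⟨j, hj⟩ := exists_bundle_ne_of_ne hne
  have hA := swu_dealUtility_left A A' j hj
  have hA' := swu_dealUtility_right A A' j
  have hother : ∀ B : Res → Agent, B ≠ A → B ≠ A' →
      swu (dealUtility A A' j) B ≤ swu (dealUtility A A' j) A := fun B hBA hBA' => by
    obtain ⟨i₀, hi₀A, hi₀A'⟩ := exists_bundle_ne_ne_of_not_indDecomp hnd hBA hBA'
    linarith [swu_dealUtility_le A A' j hi₀A hi₀A']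
  refine ⟨dealUtility A A' j, fun i _ _ h => dealUtility_monotone A A' j i h,
    by linarith, hother, fun B hlt => ?_⟩
  by_contra hBA'
  rcases eq_or_ne B A with rfl | hBA
  · exact lt_irrefl _ hlt
  · exact (hother B hBA hBA').not_gt hlt
end
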